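/- Suppose ‖Q_0‖ ≤ C_max/(1 − β) and the parameter sequence satisfies |θ_n| ≤ 1 for all n and |θ_n| is monotonically nonincreasing. Then the iterates of smooth two-step Q-learning satisfy, for every n ≥ 1, ‖Q_n‖ ≤ (C_max/(1 − β) + (log|A|)/(N(1 − β)))(1 + β|θ_0|) · ∏_{i=1}^{n−1} (1 + α_i β² |θ_i|). -/

import Mathlib

open Finset Real Filter

variable {S A : Type*}

/-- Maximum norm `‖Q‖ = max_{(i,a)} |Q(i,a)|`. -/
noncomputable def maxNorm [Fintype S] [Fintype A] [Nonempty S] [Nonempty A]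
    (Q : S × A → ℝ) : ℝ :=
  Finset.univ.sup' Finset.univ_nonempty fun x => |Q x|

/-- One smooth two-step Q-learning (S-TSQL) update: the selected pair `sa` is updated
using rewards `c'`, `c''`, next states `j`, `k`, step size `α`, parameter `θ`, and the
log-sum-exp operator with parameter `N` in place of the max; all other entries stay
unchanged. -/
noncomputable def stsqlUpdate [Fintype A] [DecidableEq S] [DecidableEq A]
    (β N : ℝ) (Q : S × A → ℝ) (sa : S × A) (j k : S) (c' c'' α θ : ℝ) : S × A → ℝ :=
  fun x => if x = sa then
      (1 - α) * Q sa +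
        α * (c' + (β / N) * Real.log (∑ b, Real.exp (N * Q (j, b)))
          + β * θ * (c'' + (β / N) * Real.log (∑ e, Real.exp (N * Q (k, e)))))
    else Q x

/-!
The log-sum-exp operator `(1/N) log ∑_b e^{N x_b}` lies within `log|A|/N` of `max_b x_b`, so each
smoothed target `c + (β/N) log ∑_b e^{N Q(j,b)}` is bounded by `C_max + β (log|A|/N + ‖Q‖)`.
With `D = (C_max + log|A|/N)/(1 − β)` this is at most `D` whenever `‖Q‖ ≤ D`, which gives the
factor `1 + β|θ₀|` in the first step. Afterwards the bound `B` exceeds `D(1 + β|θ₀|)`, hence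
`(1 − β) B` dominates `(1 + β|θₙ|)(C_max + β log|A|/N)` because `|θₙ| ≤ |θ₀|`, and a convex
combination step then inflates `B` by at most the factor `1 + αₙ β² |θₙ|`.
-/

section MaxNorm

variable [Fintype S] [Fintype A] [Nonempty S] [Nonempty A]

lemma abs_le_maxNorm (Q : S × A → ℝ) (x : S × A) : |Q x| ≤ maxNorm Q :=
  le_sup' (fun x => |Q x|) (mem_univ x)

lemma maxNorm_le {Q : S × A → ℝ} {M : ℝ} (h : ∀ x, |Q x| ≤ M) : maxNorm Q ≤ M :=
  sup'_le _ _ fun x _ => h x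

lemma maxNorm_nonneg (Q : S × A → ℝ) : 0 ≤ maxNorm Q :=
  (abs_nonneg _).trans (abs_le_maxNorm Q (Classical.arbitrary _))

end MaxNorm

lemma abs_log_sum_exp_mul_le {ι : Type*} [Fintype ι] [Nonempty ι] {N M : ℝ} (hN : 0 < N)
    {f : ι → ℝ} (hf : ∀ i, |f i| ≤ M) :
    |log (∑ i, exp (N * f i))| ≤ log (Fintype.card ι) + N * M := by
  have hlog_card : 0 ≤ log (Fintype.card ι) := log_nonneg (by exact_mod_cast Fintype.card_pos)
  obtain ⟨i₀⟩ := ‹Nonempty ι›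
  have hlower : N * f i₀ ≤ log (∑ i, exp (N * f i)) := by
    rw [← log_exp (N * f i₀)]
    exact log_le_log (exp_pos _)
      (single_le_sum (f := fun i => exp (N * f i)) (fun i _ => (exp_pos _).le) (mem_univ i₀))
  have hupper : ∑ i, exp (N * f i) ≤ Fintype.card ι * exp (N * M) := by
    calc ∑ i, exp (N * f i) ≤ ∑ _i : ι, exp (N * M) :=
          sum_le_sum fun i _ => exp_le_exp.mpr
            (mul_le_mul_of_nonneg_left (abs_le.mp (hf i)).2 hN.le)
      _ = Fintype.card ι * exp (N * M) := by simp
  rw [abs_le]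
  constructor
  · nlinarith [(abs_le.mp (hf i₀)).1]
  · calc log (∑ i, exp (N * f i)) ≤ log (Fintype.card ι * exp (N * M)) :=
          log_le_log (sum_pos (fun i _ => exp_pos _) univ_nonempty) hupper
      _ = log (Fintype.card ι) + N * M := by
          rw [log_mul (by positivity) (exp_ne_zero _), log_exp]

section SmoothTarget

variable [Fintype A]

noncomputable def smoothTarget (β N : ℝ) (Q : S × A → ℝ) (c : ℝ) (j : S) : ℝ :=
  c + (β / N) * log (∑ b, exp (N * Q (j, b)))

variable [Fintype S] [Nonempty S] [Nonempty A]

lemma abs_smoothTarget_le {β N Cmax M c : ℝ} (hβ : 0 ≤ β) (hN : 0 < N) (hc : |c| ≤ Cmax)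
    {Q : S × A → ℝ} (hQ : maxNorm Q ≤ M) (j : S) :
    |smoothTarget β N Q c j| ≤ Cmax + β * (log (Fintype.card A) / N + M) := by
  have hlse := abs_log_sum_exp_mul_le hN (f := fun b => Q (j, b))
    fun b => (abs_le_maxNorm Q (j, b)).trans hQ
  have hβN : 0 ≤ β / N := div_nonneg hβ hN.le
  calc |smoothTarget β N Q c j|
      ≤ |c| + |β / N * log (∑ b, exp (N * Q (j, b)))| := abs_add_le _ _
    _ = |c| + β / N * |log (∑ b, exp (N * Q (j, b)))| := by rw [abs_mul, abs_of_nonneg hβN]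
    _ ≤ Cmax + β / N * (log (Fintype.card A) + N * M) := by gcongr
    _ = Cmax + β * (log (Fintype.card A) / N + M) := by field_simp

end SmoothTarget

section Update

variable [Fintype A] [DecidableEq S] [DecidableEq A]

lemma stsqlUpdate_apply_self (β N : ℝ) (Q : S × A → ℝ) (sa : S × A) (j k : S)
    (c' c'' α θ : ℝ) :
    stsqlUpdate β N Q sa j k c' c'' α θ sa =
      (1 - α) * Q sa + α * (smoothTarget β N Q c' j + β * θ * smoothTarget β N Q c'' k) := by
  simp [stsqlUpdate, smoothTarget]

lemma stsqlUpdate_apply_of_ne (β N : ℝ) (Q : S × A → ℝ) {sa x : S × A} (j k : S)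
    (c' c'' α θ : ℝ) (hx : x ≠ sa) :
    stsqlUpdate β N Q sa j k c' c'' α θ x = Q x := by
  simp [stsqlUpdate, hx]

variable [Fintype S] [Nonempty S] [Nonempty A]

lemma maxNorm_stsqlUpdate_le {β N Cmax M c' c'' α : ℝ} (hβ : 0 ≤ β) (hN : 0 < N)
    (hc' : |c'| ≤ Cmax) (hc'' : |c''| ≤ Cmax) (hα0 : 0 ≤ α) (hα1 : α ≤ 1)
    {Q : S × A → ℝ} (hQ : maxNorm Q ≤ M) (sa : S × A) (j k : S) (θ : ℝ) :
    maxNorm (stsqlUpdate β N Q sa j k c' c'' α θ) ≤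
      max M ((1 - α) * M +
        α * ((1 + β * |θ|) * (Cmax + β * (log (Fintype.card A) / N + M)))) := by
  refine maxNorm_le fun x => ?_
  obtain rfl | hx := eq_or_ne x sa
  · rw [stsqlUpdate_apply_self]
    refine le_max_of_le_right ?_
    set T₁ := smoothTarget β N Q c' j
    set T₂ := smoothTarget β N Q c'' k
    have hT₁ : |T₁| ≤ Cmax + β * (log (Fintype.card A) / N + M) :=
      abs_smoothTarget_le hβ hN hc' hQ j
    have hT₂ : |T₂| ≤ Cmax + β * (log (Fintype.card A) / N + M) :=
      abs_smoothTarget_le hβ hN hc'' hQ k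
    have hQx := (abs_le_maxNorm Q x).trans hQ
    have hα1' := sub_nonneg.mpr hα1
    calc |(1 - α) * Q x + α * (T₁ + β * θ * T₂)|
        ≤ |(1 - α) * Q x| + |α * (T₁ + β * θ * T₂)| := abs_add_le _ _
      _ ≤ (1 - α) * |Q x| + α * (|T₁| + β * |θ| * |T₂|) := by
          rw [abs_mul, abs_mul, abs_of_nonneg hα0, abs_of_nonneg hα1']
          gcongr
          exact (abs_add_le _ _).trans_eq (by rw [abs_mul, abs_mul, abs_of_nonneg hβ])
      _ ≤ _ := by
          gcongr
          linarith [mul_le_mul_of_nonneg_left hT₂ (by positivity : 0 ≤ β * |θ|)]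
  · rw [stsqlUpdate_apply_of_ne _ _ _ _ _ _ _ _ _ hx]
    exact le_max_of_le_left ((abs_le_maxNorm Q x).trans hQ)

lemma maxNorm_stsqlUpdate_le_of_target_le {β N Cmax M c' c'' α : ℝ} (hβ : 0 ≤ β) (hN : 0 < N)
    (hc' : |c'| ≤ Cmax) (hc'' : |c''| ≤ Cmax) (hα0 : 0 ≤ α) (hα1 : α ≤ 1)
    {Q : S × A → ℝ} (hQ : maxNorm Q ≤ M)
    (hM : Cmax + β * (log (Fintype.card A) / N + M) ≤ M) (sa : S × A) (j k : S) (θ : ℝ) :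
    maxNorm (stsqlUpdate β N Q sa j k c' c'' α θ) ≤ M * (1 + β * |θ|) := by
  have hM0 : 0 ≤ M := (maxNorm_nonneg Q).trans hQ
  have hβθ : 0 ≤ β * |θ| := by positivity
  refine (maxNorm_stsqlUpdate_le hβ hN hc' hc'' hα0 hα1 hQ sa j k θ).trans (max_le ?_ ?_)
  · nlinarith
  · have : 0 ≤ (1 - α) * (β * |θ| * M) := by have := sub_nonneg.mpr hα1; positivity
    nlinarith [mul_le_mul_of_nonneg_left hM (by positivity : 0 ≤ α * (1 + β * |θ|))]

lemma maxNorm_stsqlUpdate_le_mul {β N Cmax M c' c'' α : ℝ} (hβ : 0 ≤ β) (hN : 0 < N)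
    (hc' : |c'| ≤ Cmax) (hc'' : |c''| ≤ Cmax) (hα0 : 0 ≤ α) (hα1 : α ≤ 1)
    {Q : S × A → ℝ} (hQ : maxNorm Q ≤ M) {θ : ℝ}
    (hM : (1 + β * |θ|) * (Cmax + β * (log (Fintype.card A) / N)) ≤ (1 - β) * M)
    (sa : S × A) (j k : S) :
    maxNorm (stsqlUpdate β N Q sa j k c' c'' α θ) ≤ M * (1 + α * β ^ 2 * |θ|) := by
  have hM0 : 0 ≤ M := (maxNorm_nonneg Q).trans hQ
  refine (maxNorm_stsqlUpdate_le hβ hN hc' hc'' hα0 hα1 hQ sa j k θ).trans (max_le ?_ ?_)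
  · have : 0 ≤ α * β ^ 2 * |θ| * M := by positivity
    nlinarith
  · nlinarith [mul_le_mul_of_nonneg_left hM hα0]

end Update

theorem stsql_iterates_bound_general [Fintype S] [Fintype A] [Nonempty S] [Nonempty A]
    [DecidableEq S] [DecidableEq A]
    (β Cmax : ℝ) (hβ0 : 0 ≤ β) (hβ1 : β < 1) (hC : 0 ≤ Cmax)
    (N : ℝ) (hN : 0 < N)
    (Q : ℕ → S × A → ℝ) (sa : ℕ → S × A) (j k : ℕ → S) (c' c'' α θ : ℕ → ℝ)
    (hc' : ∀ n, |c' n| ≤ Cmax) (hc'' : ∀ n, |c'' n| ≤ Cmax)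
    (hα0 : ∀ n, 0 ≤ α n) (hα1 : ∀ n, α n ≤ 1)
    (hθmono : Antitone fun n => |θ n|)
    (hupd : ∀ n, Q (n + 1) =
      stsqlUpdate β N (Q n) (sa n) (j n) (k n) (c' n) (c'' n) (α n) (θ n))
    (hQ0 : maxNorm (Q 0) ≤ Cmax / (1 - β)) :
    ∀ n, 1 ≤ n → maxNorm (Q n) ≤
      (Cmax / (1 - β) + Real.log (Fintype.card A) / (N * (1 - β))) * (1 + β * |θ 0|) *
        ∏ i ∈ Finset.Icc 1 (n - 1), (1 + α i * β ^ 2 * |θ i|) := by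
  set L := log (Fintype.card A) / N
  set D := Cmax / (1 - β) + log (Fintype.card A) / (N * (1 - β))
  have hL : 0 ≤ L := div_nonneg (log_nonneg (by exact_mod_cast Fintype.card_pos)) hN.le
  have hD : (1 - β) * D = Cmax + L := by
    simp only [D, L]; field_simp [(sub_pos.mpr hβ1).ne']
  suffices h : ∀ m, maxNorm (Q (m + 1)) ≤
      D * (1 + β * |θ 0|) * ∏ i ∈ Icc 1 m, (1 + α i * β ^ 2 * |θ i|) by
    intro n hn
    obtain ⟨m, rfl⟩ := Nat.exists_eq_add_of_le' hn
    simpa using h m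
  intro m
  induction m with
  | zero =>
    rw [hupd, Icc_eq_empty (by omega), prod_empty, mul_one]
    refine maxNorm_stsqlUpdate_le_of_target_le hβ0 hN (hc' 0) (hc'' 0) (hα0 0) (hα1 0) ?_ ?_ ..
    · exact hQ0.trans (le_add_of_nonneg_right (by positivity))
    · nlinarith
  | succ m ih =>
    rw [hupd, prod_Icc_succ_top (by omega), ← mul_assoc]
    refine maxNorm_stsqlUpdate_le_mul hβ0 hN (hc' _) (hc'' _) (hα0 _) (hα1 _) ih ?_ ..
    have hθ : |θ (m + 1)| ≤ |θ 0| := hθmono (Nat.zero_le _)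
    have hprod : 1 ≤ ∏ i ∈ Icc 1 m, (1 + α i * β ^ 2 * |θ i|) :=
      one_le_prod fun i _ => le_add_of_nonneg_right (by positivity [hα0 i])
    calc (1 + β * |θ (m + 1)|) * (Cmax + β * L)
        ≤ (1 + β * |θ 0|) * ((1 - β) * D) := by
          rw [hD]; gcongr; nlinarith
      _ ≤ (1 + β * |θ 0|) * ((1 - β) * D) * ∏ i ∈ Icc 1 m, (1 + α i * β ^ 2 * |θ i|) :=
          le_mul_of_one_le_right (by rw [hD]; positivity) hprod
      _ = (1 - β) * (D * (1 + β * |θ 0|) * ∏ i ∈ Icc 1 m, (1 + α i * β ^ 2 * |θ i|)) := by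
          ring

/-- If `‖Q₀‖ ≤ C_max/(1−β)`, `|θₙ| ≤ 1` and `|θₙ|` is nonincreasing, then the S-TSQL
iterates satisfy, for every `n ≥ 1`,
`‖Qₙ‖ ≤ (C_max/(1−β) + log|A|/(N(1−β)))(1 + β|θ₀|) ∏_{i=1}^{n−1} (1 + αᵢ β² |θᵢ|)`. -/
theorem stsql_iterates_bound [Fintype S] [Fintype A] [Nonempty S] [Nonempty A]
    [DecidableEq S] [DecidableEq A]
    (β Cmax : ℝ) (hβ0 : 0 ≤ β) (hβ1 : β < 1) (hC : 0 ≤ Cmax)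
    (N : ℝ) (hN : 0 < N)
    (Q : ℕ → S × A → ℝ) (sa : ℕ → S × A) (j k : ℕ → S) (c' c'' α θ : ℕ → ℝ)
    (hc' : ∀ n, |c' n| ≤ Cmax) (hc'' : ∀ n, |c'' n| ≤ Cmax)
    (hα0 : ∀ n, 0 ≤ α n) (hα1 : ∀ n, α n ≤ 1)
    (hθ1 : ∀ n, |θ n| ≤ 1) (hθmono : Antitone fun n => |θ n|)
    (hupd : ∀ n, Q (n + 1) =
      stsqlUpdate β N (Q n) (sa n) (j n) (k n) (c' n) (c'' n) (α n) (θ n))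
    (hQ0 : maxNorm (Q 0) ≤ Cmax / (1 - β)) :
    ∀ n, 1 ≤ n → maxNorm (Q n) ≤
      (Cmax / (1 - β) + Real.log (Fintype.card A) / (N * (1 - β))) * (1 + β * |θ 0|) *
        ∏ i ∈ Finset.Icc 1 (n - 1), (1 + α i * β ^ 2 * |θ i|) :=
  stsql_iterates_bound_general β Cmax hβ0 hβ1 hC N hN Q sa j k c' c'' α θ hc' hc'' hα0 hα1 hθmono
    hupd hQ0
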